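/- arXiv:2410.09661 — 2 statements merged into one kernel-verified Lean document; each statement's English description precedes it below -/
import Mathlib

section
/- Suppose a sequence of discrete probability-type measures μ_m = (1/m^n) ∑_α d_{m,α} δ_{(x_{m,α}, y_{m,α})} on R² (with d_{m,α} ≥ 0) converges weakly to a Radon measure μ, supported in the region {(x,y) : x ≥ −A, |y| ≤ Ax + B}, with uniform bound μ_m({x ≤ λ}) ≤ C(λ+1)^n. Then lim_m ∫ y e^{−x} dμ_m = ∫ y e^{−x} dμ, and both sides are finite. -/
/-!
On the wedge `|y| ≤ A x + B`, `x ≥ -A`, one has `|y e^{-x}| ≤ K e^{-x/2}`, so beyond `x = r` the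
integrand is at most `K e^{-r/4}` times the weight `e^{-x/4}`. Splitting into unit shells
`x ≤ ℓ`, the polynomial sublevel bounds make `∫ e^{-x/4} dμ_m` uniformly bounded by a convergent
series `M`; by Fatou and vague convergence against compactly supported truncations the same bound
holds for `ν`. Multiplying the integrand by a continuous compactly supported cutoff equal to `1`
on the part of the wedge with `x ≤ r` therefore changes every integral by at most `K e^{-r/4} M`,
and the truncated integrals converge by hypothesis.
-/

open MeasureTheory Filter Topology Set Real
open scoped ENNReal

lemma tendsto_of_tendsto_of_abs_sub_le {ι : Type*} {l : Filter ι} {a : ι → ℝ} {b : ℝ}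
    {a' : ℕ → ι → ℝ} {b' δ : ℕ → ℝ} (hδ : Tendsto δ atTop (𝓝 0))
    (ha : ∀ r, ∀ᶠ i in l, |a i - a' r i| ≤ δ r) (hb : ∀ r, |b - b' r| ≤ δ r)
    (h : ∀ r, Tendsto (a' r) l (𝓝 (b' r))) : Tendsto a l (𝓝 b) := by
  rw [Metric.tendsto_nhds]
  intro ε hε
  obtain ⟨r, hr⟩ := (hδ.eventually (gt_mem_nhds (by linarith : (0 : ℝ) < ε / 3))).exists
  filter_upwards [ha r, Metric.tendsto_nhds.1 (h r) (ε / 3) (by linarith)] with i hi hi'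
  rw [Real.dist_eq] at hi' ⊢
  linarith [hb r, abs_sub_le (a i) (a' r i) b, abs_sub_le (a' r i) (b' r) b, abs_sub_comm b (b' r)]

section Integrals

variable {α : Type*} [MeasurableSpace α] {ρ : Measure α}

lemma ofReal_integral_le_lintegral_ofReal {f : α → ℝ} (hf : 0 ≤ᵐ[ρ] f) :
    ENNReal.ofReal (∫ p, f p ∂ρ) ≤ ∫⁻ p, ENNReal.ofReal (f p) ∂ρ := by
  by_cases hfi : Integrable f ρ
  · exact (ofReal_integral_eq_lintegral_ofReal hfi hf).le
  · simp [integral_undef hfi]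

lemma integrable_and_integral_le_of_lintegral_ofReal_le {W : α → ℝ}
    (hW : AEStronglyMeasurable W ρ) (hW0 : 0 ≤ᵐ[ρ] W) {M : ℝ≥0∞} (hM : M ≠ ∞)
    (h : ∫⁻ p, ENNReal.ofReal (W p) ∂ρ ≤ M) : Integrable W ρ ∧ ∫ p, W p ∂ρ ≤ M.toReal := by
  refine ⟨⟨hW, (hasFiniteIntegral_iff_ofReal hW0).2 (h.trans_lt hM.lt_top)⟩, ?_⟩
  rw [integral_eq_lintegral_of_nonneg_ae hW0 hW]
  exact ENNReal.toReal_mono hM h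

lemma abs_integral_sub_le_of_abs_sub_le {f g W : α → ℝ} {δ : ℝ} (hf : Integrable f ρ)
    (hg : Integrable g ρ) (hW : Integrable W ρ) (h : ∀ᵐ p ∂ρ, |f p - g p| ≤ δ * W p) :
    |∫ p, f p ∂ρ - ∫ p, g p ∂ρ| ≤ δ * ∫ p, W p ∂ρ := by
  rw [← integral_sub hf hg, ← integral_const_mul]
  exact norm_integral_le_of_norm_le (hW.const_mul δ) (h.mono fun p hp => by rwa [Real.norm_eq_abs])

lemma lintegral_ofReal_le_of_tendsto_integral {μ : ℕ → Measure α} {ν : Measure α}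
    {W : α → ℝ} {g : ℕ → α → ℝ} (hg : ∀ r, Integrable (g r) ν) (hg0 : ∀ r p, 0 ≤ g r p)
    (hgW : ∀ r p, g r p ≤ W p) (hgν : ∀ᵐ p ∂ν, ∀ᶠ r in atTop, g r p = W p)
    (hconv : ∀ r, Tendsto (fun m => ∫ p, g r p ∂μ m) atTop (𝓝 (∫ p, g r p ∂ν)))
    {M : ℝ≥0∞} (hM : ∀ᶠ m in atTop, ∫⁻ p, ENNReal.ofReal (W p) ∂μ m ≤ M) :
    ∫⁻ p, ENNReal.ofReal (W p) ∂ν ≤ M := by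
  have hg_le : ∀ r, ∫⁻ p, ENNReal.ofReal (g r p) ∂ν ≤ M := by
    intro r
    rw [← ofReal_integral_eq_lintegral_ofReal (hg r) (ae_of_all _ (hg0 r))]
    refine le_of_tendsto (ENNReal.tendsto_ofReal (hconv r)) (hM.mono fun m hm => ?_)
    calc ENNReal.ofReal (∫ p, g r p ∂μ m)
        ≤ ∫⁻ p, ENNReal.ofReal (g r p) ∂μ m :=
          ofReal_integral_le_lintegral_ofReal (ae_of_all _ (hg0 r))
      _ ≤ ∫⁻ p, ENNReal.ofReal (W p) ∂μ m :=
          lintegral_mono fun p => ENNReal.ofReal_le_ofReal (hgW r p)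
      _ ≤ M := hm
  calc ∫⁻ p, ENNReal.ofReal (W p) ∂ν
      = ∫⁻ p, liminf (fun r => ENNReal.ofReal (g r p)) atTop ∂ν := by
        refine lintegral_congr_ae (hgν.mono fun p hp => ?_)
        exact (tendsto_const_nhds.congr' (hp.mono fun r hr => by rw [hr])).liminf_eq.symm
    _ ≤ liminf (fun r => ∫⁻ p, ENNReal.ofReal (g r p) ∂ν) atTop :=
        lintegral_liminf_le' fun r => (hg r).aemeasurable.ennreal_ofReal
    _ ≤ M := liminf_le_of_frequently_le' (Frequently.of_forall hg_le)

lemma lintegral_exp_neg_le_tsum {X : α → ℝ} (hX : Measurable X) {a A C : ℝ} {n : ℕ}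
    (ha : 0 ≤ a) (hA : 0 ≤ A) (hρ : ∀ᵐ p ∂ρ, -A ≤ X p)
    (hbound : ∀ ℓ : ℕ, ρ {p | X p ≤ ℓ} ≤ ENNReal.ofReal (C * ((ℓ : ℝ) + 1) ^ n)) :
    ∫⁻ p, ENNReal.ofReal (exp (-a * X p)) ∂ρ ≤
      ∑' ℓ : ℕ, ENNReal.ofReal (exp (a * (A + 1 - ℓ))) *
        ENNReal.ofReal (C * ((ℓ : ℝ) + 1) ^ n) := by
  have hmeas : ∀ ℓ : ℕ, MeasurableSet {p | X p ≤ ℓ} :=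
    fun ℓ => measurableSet_le hX measurable_const
  calc ∫⁻ p, ENNReal.ofReal (exp (-a * X p)) ∂ρ
      ≤ ∫⁻ p, ∑' ℓ : ℕ,
          {p | X p ≤ ℓ}.indicator (fun _ => ENNReal.ofReal (exp (a * (A + 1 - ℓ)))) p ∂ρ := by
        refine lintegral_mono_ae (hρ.mono fun p hp => ?_)
        refine le_trans ?_ (ENNReal.le_tsum ⌈X p⌉₊)
        rw [indicator_of_mem (show p ∈ {q | X q ≤ (⌈X p⌉₊ : ℝ)} from Nat.le_ceil (X p))]
        refine ENNReal.ofReal_le_ofReal (exp_le_exp.2 ?_)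
        have hceil : (⌈X p⌉₊ : ℝ) ≤ X p + A + 1 := by
          rcases le_or_gt 0 (X p) with h | h
          · linarith [Nat.ceil_lt_add_one h]
          · rw [Nat.ceil_eq_zero.2 h.le, Nat.cast_zero]
            linarith
        nlinarith
    _ = ∑' ℓ : ℕ, ENNReal.ofReal (exp (a * (A + 1 - ℓ))) * ρ {p | X p ≤ ℓ} := by
        rw [lintegral_tsum fun ℓ => (measurable_const.indicator (hmeas ℓ)).aemeasurable]
        simp_rw [lintegral_indicator_const (hmeas _)]
    _ ≤ _ := ENNReal.tsum_le_tsum fun ℓ => by gcongr; exact hbound ℓ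

end Integrals

lemma tsum_ofReal_exp_mul_pow_ne_top {a : ℝ} (ha : 0 < a) (b C : ℝ) (n : ℕ) :
    ∑' ℓ : ℕ, ENNReal.ofReal (exp (a * (b - ℓ))) * ENNReal.ofReal (C * ((ℓ : ℝ) + 1) ^ n)
      ≠ ∞ := by
  have hsum : Summable fun ℓ : ℕ => exp (a * (b - ℓ)) * (C * ((ℓ : ℝ) + 1) ^ n) := by
    refine (((summable_nat_add_iff 1).2 (summable_pow_mul_exp_neg_nat_mul n ha)).mul_left
      (C * exp (a * (b + 1)))).congr fun ℓ => ?_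
    rw [show a * (b - ℓ) = a * (b + 1) + -a * ↑(ℓ + 1) by push_cast; ring, exp_add]
    push_cast
    ring
  simp_rw [← ENNReal.ofReal_mul (exp_pos _).le]
  exact ENNReal.tsum_coe_ne_top_iff_summable.2 hsum.toNNReal

section Cutoff

variable {α : Type*} [PseudoMetricSpace α]

noncomputable def cutoff (K : Set α) (p : α) : ℝ := thickenedIndicator one_pos K p

lemma continuous_cutoff (K : Set α) : Continuous (cutoff K) :=
  NNReal.continuous_coe.comp (thickenedIndicator one_pos K).continuous

lemma cutoff_nonneg (K : Set α) (p : α) : 0 ≤ cutoff K p := NNReal.coe_nonneg _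

lemma cutoff_le_one (K : Set α) (p : α) : cutoff K p ≤ 1 := by
  exact_mod_cast thickenedIndicator_le_one one_pos K p

lemma cutoff_eq_one {K : Set α} {p : α} (hp : p ∈ K) : cutoff K p = 1 := by
  simp [cutoff, thickenedIndicator_one one_pos K hp]

lemma hasCompactSupport_cutoff [ProperSpace α] {K : Set α} (hK : IsCompact K) :
    HasCompactSupport (cutoff K) :=
  HasCompactSupport.intro (hK.cthickening (r := 1)) fun p hp => by
    simp [cutoff, thickenedIndicator_zero one_pos K
      fun h => hp (Metric.thickening_subset_cthickening 1 K h)]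

end Cutoff

def wedge (A B : ℝ) : Set (ℝ × ℝ) := {p | -A ≤ p.1 ∧ |p.2| ≤ A * p.1 + B}

lemma isCompact_wedge_inter_fst_le {A : ℝ} (hA : 0 ≤ A) (B r : ℝ) :
    IsCompact (wedge A B ∩ {p | p.1 ≤ r}) := by
  refine ((isCompact_Icc (a := -A) (b := r)).prod
    (isCompact_Icc (a := -(A * r + B)) (b := A * r + B))).of_isClosed_subset ?_ ?_
  · exact ((isClosed_le continuous_const continuous_fst).inter
      (isClosed_le (continuous_abs.comp continuous_snd)
        ((continuous_const.mul continuous_fst).add continuous_const))).inter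
      (isClosed_le continuous_fst continuous_const)
  · rintro p ⟨⟨h1, h2⟩, h3⟩
    have : A * p.1 ≤ A * r := mul_le_mul_of_nonneg_left h3 hA
    exact ⟨⟨h1, h3⟩, abs_le.1 (h2.trans (by linarith))⟩

-- On the wedge `|y| ≤ A (x + A) + (B - A²)` with `x + A ≥ 0`, and `t ≤ 2 e^{t/2}`, `1 ≤ e^{t/2}`
-- for `t ≥ 0`, so `|y| ≤ K e^{x/2}`.
lemma exists_abs_snd_mul_exp_neg_le {A : ℝ} (hA : 0 ≤ A) (B : ℝ) :
    ∃ K, 0 ≤ K ∧ ∀ p ∈ wedge A B, ∀ r ≤ p.1,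
      |p.2 * exp (-p.1)| ≤ K * exp (-(1 / 4) * r) * exp (-(1 / 4) * p.1) := by
  set c := 2 * A + |B - A ^ 2|
  refine ⟨c * exp (A / 2), by positivity, fun p ⟨h1, h2⟩ r hr => ?_⟩
  have e1 := add_one_le_exp ((p.1 + A) / 2)
  have e2 : 1 ≤ exp ((p.1 + A) / 2) := one_le_exp (by linarith)
  have hy : |p.2| ≤ c * exp ((p.1 + A) / 2) := by
    nlinarith [le_abs_self (B - A ^ 2), mul_nonneg hA (sub_nonneg.2 e1),
      mul_nonneg (abs_nonneg (B - A ^ 2)) (sub_nonneg.2 e2)]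
  calc |p.2 * exp (-p.1)| = |p.2| * exp (-p.1) := by rw [abs_mul, abs_exp]
    _ ≤ c * exp ((p.1 + A) / 2) * exp (-p.1) := by gcongr
    _ = c * exp (A / 2) * exp (-(1 / 4) * p.1) * exp (-(1 / 4) * p.1) := by
        rw [mul_assoc, ← exp_add, mul_assoc, mul_assoc, ← exp_add, ← exp_add]
        ring_nf
    _ ≤ c * exp (A / 2) * exp (-(1 / 4) * r) * exp (-(1 / 4) * p.1) := by
        gcongr c * exp (A / 2) * ?_ * _
        exact exp_le_exp.2 (by linarith)

lemma integrable_and_abs_integral_sub_le {A B K : ℝ} {f : ℝ × ℝ → ℝ} (hf : Continuous f)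
    (hK0 : 0 ≤ K)
    (hK : ∀ p ∈ wedge A B, ∀ r ≤ p.1, |f p| ≤ K * exp (-(1 / 4) * r) * exp (-(1 / 4) * p.1))
    {ρ : Measure (ℝ × ℝ)} (hρ : ∀ᵐ p ∂ρ, p ∈ wedge A B) {M : ℝ≥0∞} (hM : M ≠ ∞)
    (hρM : ∫⁻ p, ENNReal.ofReal (exp (-(1 / 4) * p.1)) ∂ρ ≤ M) :
    Integrable f ρ ∧ ∀ r : ℝ, |∫ p, f p ∂ρ - ∫ p, f p * cutoff (wedge A B ∩ {p | p.1 ≤ r}) p ∂ρ|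
      ≤ K * exp (-(1 / 4) * r) * M.toReal := by
  obtain ⟨hWi, hWM⟩ := integrable_and_integral_le_of_lintegral_ofReal_le
    (by fun_prop : Continuous fun p : ℝ × ℝ => exp (-(1 / 4) * p.1)).aestronglyMeasurable
    (ae_of_all _ fun p => (exp_pos _).le) hM hρM
  have hfi : Integrable f ρ :=
    (hWi.const_mul (K * exp (-(1 / 4) * -A))).mono' hf.aestronglyMeasurable
      (hρ.mono fun p hp => hK p hp (-A) hp.1)
  refine ⟨hfi, fun r => ?_⟩
  set χ := cutoff (wedge A B ∩ {p | p.1 ≤ r})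
  have hfχ : Integrable (fun p => f p * χ p) ρ :=
    hfi.mono (hf.mul (continuous_cutoff _)).aestronglyMeasurable (ae_of_all _ fun p => by
      rw [norm_mul]
      exact mul_le_of_le_one_right (norm_nonneg _)
        ((Real.norm_of_nonneg (cutoff_nonneg _ p)).trans_le (cutoff_le_one _ p)))
  have htail : ∀ p ∈ wedge A B,
      |f p - f p * χ p| ≤ K * exp (-(1 / 4) * r) * exp (-(1 / 4) * p.1) := by
    intro p hp
    rcases le_or_gt p.1 r with h | h
    · have hχ1 : χ p = 1 := cutoff_eq_one ⟨hp, h⟩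
      rw [hχ1, mul_one, sub_self, abs_zero]
      positivity
    · calc |f p - f p * χ p| = |f p| * (1 - χ p) := by
            rw [← mul_one_sub, abs_mul, abs_of_nonneg (sub_nonneg.2 (cutoff_le_one _ p))]
        _ ≤ |f p| := mul_le_of_le_one_right (abs_nonneg _) (sub_le_self _ (cutoff_nonneg _ p))
        _ ≤ _ := hK p hp r h.le
  calc _ ≤ K * exp (-(1 / 4) * r) * ∫ p, exp (-(1 / 4) * p.1) ∂ρ :=
        abs_integral_sub_le_of_abs_sub_le hfi hfχ hWi (hρ.mono htail)
    _ ≤ K * exp (-(1 / 4) * r) * M.toReal := by gcongr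

lemma lintegral_ofReal_le_of_tendsto_integral_wedge {A B : ℝ} (hA : 0 ≤ A)
    {μ : ℕ → Measure (ℝ × ℝ)} {ν : Measure (ℝ × ℝ)} [IsFiniteMeasureOnCompacts ν]
    (hν : ∀ᵐ p ∂ν, p ∈ wedge A B)
    (hweak : ∀ g : ℝ × ℝ → ℝ, Continuous g → HasCompactSupport g →
      Tendsto (fun m => ∫ p, g p ∂μ m) atTop (𝓝 (∫ p, g p ∂ν)))
    {W : ℝ × ℝ → ℝ} (hW : Continuous W) (hW0 : ∀ p, 0 ≤ W p)
    {M : ℝ≥0∞} (hM : ∀ᶠ m in atTop, ∫⁻ p, ENNReal.ofReal (W p) ∂μ m ≤ M) :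
    ∫⁻ p, ENNReal.ofReal (W p) ∂ν ≤ M := by
  set χ : ℕ → ℝ × ℝ → ℝ := fun r => cutoff (wedge A B ∩ {p | p.1 ≤ r})
  have hWχ : ∀ r, Continuous (fun p => W p * χ r p) ∧ HasCompactSupport (fun p => W p * χ r p) :=
    fun r => ⟨hW.mul (continuous_cutoff _),
      (hasCompactSupport_cutoff (isCompact_wedge_inter_fst_le hA B r)).mul_left⟩
  refine lintegral_ofReal_le_of_tendsto_integral (g := fun r p => W p * χ r p)
    (fun r => (hWχ r).1.integrable_of_hasCompactSupport (hWχ r).2)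
    (fun r p => mul_nonneg (hW0 p) (cutoff_nonneg _ p))
    (fun r p => mul_le_of_le_one_right (hW0 p) (cutoff_le_one _ p))
    (hν.mono fun p hp => (eventually_ge_atTop ⌈p.1⌉₊).mono fun r hr => ?_)
    (fun r => hweak _ (hWχ r).1 (hWχ r).2) hM
  rw [show χ r p = 1 from cutoff_eq_one ⟨hp, (Nat.le_ceil _).trans (Nat.cast_le.2 hr)⟩, mul_one]

theorem stmt_11_general (n : ℕ) (A B C : ℝ) (hA : 0 < A)
    (μ : ℕ → Measure (ℝ × ℝ)) (ν : Measure (ℝ × ℝ)) [IsLocallyFiniteMeasure ν]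
    (hsupp : ∀ m, (μ m) {p : ℝ × ℝ | ¬ (p.1 ≥ -A ∧ |p.2| ≤ A * p.1 + B)} = 0)
    (hsuppν : ν {p : ℝ × ℝ | ¬ (p.1 ≥ -A ∧ |p.2| ≤ A * p.1 + B)} = 0)
    (hbound : ∀ m : ℕ, 1 ≤ m → ∀ lam ≥ (0 : ℝ),
      (μ m) {p : ℝ × ℝ | p.1 ≤ lam} ≤ ENNReal.ofReal (C * (lam + 1) ^ n))
    (hweak : ∀ f : ℝ × ℝ → ℝ, Continuous f → HasCompactSupport f →
      Tendsto (fun m => ∫ p, f p ∂(μ m)) atTop (nhds (∫ p, f p ∂ν))) :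
    (∀ m : ℕ, 1 ≤ m → Integrable (fun p : ℝ × ℝ => p.2 * Real.exp (-p.1)) (μ m)) ∧
    Integrable (fun p : ℝ × ℝ => p.2 * Real.exp (-p.1)) ν ∧
    Tendsto (fun m => ∫ p : ℝ × ℝ, p.2 * Real.exp (-p.1) ∂(μ m)) atTop
      (nhds (∫ p : ℝ × ℝ, p.2 * Real.exp (-p.1) ∂ν)) := by
  set f : ℝ × ℝ → ℝ := fun p => p.2 * exp (-p.1)
  set W : ℝ × ℝ → ℝ := fun p => exp (-(1 / 4) * p.1)
  have hf : Continuous f := by fun_prop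
  have hμS : ∀ m, ∀ᵐ p ∂μ m, p ∈ wedge A B := fun m => ae_iff.2 (hsupp m)
  have hνS : ∀ᵐ p ∂ν, p ∈ wedge A B := ae_iff.2 hsuppν
  obtain ⟨K, hK0, hK⟩ := exists_abs_snd_mul_exp_neg_le hA.le B
  set M := ∑' ℓ : ℕ, ENNReal.ofReal (exp (1 / 4 * (A + 1 - ℓ))) *
    ENNReal.ofReal (C * ((ℓ : ℝ) + 1) ^ n)
  have hM : M ≠ ∞ := tsum_ofReal_exp_mul_pow_ne_top (by norm_num) _ _ _
  have hμM : ∀ m, 1 ≤ m → ∫⁻ p, ENNReal.ofReal (W p) ∂μ m ≤ M := fun m hm =>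
    lintegral_exp_neg_le_tsum measurable_fst (by norm_num) hA.le
      ((hμS m).mono fun p hp => hp.1) fun ℓ => hbound m hm ℓ ℓ.cast_nonneg
  have hνM : ∫⁻ p, ENNReal.ofReal (W p) ∂ν ≤ M :=
    lintegral_ofReal_le_of_tendsto_integral_wedge hA.le hνS hweak (by fun_prop)
      (fun p => (exp_pos _).le) ((eventually_ge_atTop 1).mono hμM)
  have hν := integrable_and_abs_integral_sub_le hf hK0 hK hνS hM hνM
  have hμ := fun m hm => integrable_and_abs_integral_sub_le hf hK0 hK (hμS m) hM (hμM m hm)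
  refine ⟨fun m hm => (hμ m hm).1, hν.1, ?_⟩
  have hδ : Tendsto (fun r : ℕ => K * exp (-(1 / 4) * r) * M.toReal) atTop (𝓝 0) := by
    have := tendsto_exp_neg_atTop_nhds_zero.comp
      (tendsto_natCast_atTop_atTop.const_mul_atTop (by norm_num : (0 : ℝ) < 1 / 4))
    simpa [Function.comp_def, neg_mul] using (this.const_mul K).mul_const M.toReal
  exact tendsto_of_tendsto_of_abs_sub_le hδ
    (fun r => (eventually_ge_atTop 1).mono fun m hm => (hμ m hm).2 r) (fun r => hν.2 r)
    (fun r => hweak _ (hf.mul (continuous_cutoff _))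
      (hasCompactSupport_cutoff (isCompact_wedge_inter_fst_le hA.le B r)).mul_left)

/-- Convergence of the first moment ∫ y e^{−x} for discrete measures on ℝ² converging
weakly to a Radon measure supported in {x ≥ −A, |y| ≤ Ax + B}, with uniform polynomial
sublevel mass bounds. -/
theorem stmt_11 (n : ℕ) (A B C : ℝ) (hA : 0 < A) (hB : 0 < B) (hC : 0 < C)
    (μ : ℕ → Measure (ℝ × ℝ)) (ν : Measure (ℝ × ℝ)) [IsLocallyFiniteMeasure ν]
    (hdisc : ∀ m : ℕ, 1 ≤ m → ∃ (k : ℕ) (d : Fin k → NNReal) (pt : Fin k → ℝ × ℝ),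
      μ m = (ENNReal.ofReal (1 / (m : ℝ) ^ n)) • ∑ j, (d j : ENNReal) • Measure.dirac (pt j))
    (hsupp : ∀ m, (μ m) {p : ℝ × ℝ | ¬ (p.1 ≥ -A ∧ |p.2| ≤ A * p.1 + B)} = 0)
    (hsuppν : ν {p : ℝ × ℝ | ¬ (p.1 ≥ -A ∧ |p.2| ≤ A * p.1 + B)} = 0)
    (hbound : ∀ m : ℕ, 1 ≤ m → ∀ lam ≥ (0 : ℝ),
      (μ m) {p : ℝ × ℝ | p.1 ≤ lam} ≤ ENNReal.ofReal (C * (lam + 1) ^ n))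
    (hweak : ∀ f : ℝ × ℝ → ℝ, Continuous f → HasCompactSupport f →
      Tendsto (fun m => ∫ p, f p ∂(μ m)) atTop (nhds (∫ p, f p ∂ν))) :
    (∀ m : ℕ, 1 ≤ m → Integrable (fun p : ℝ × ℝ => p.2 * Real.exp (-p.1)) (μ m)) ∧
    Integrable (fun p : ℝ × ℝ => p.2 * Real.exp (-p.1)) ν ∧
    Tendsto (fun m => ∫ p : ℝ × ℝ, p.2 * Real.exp (-p.1) ∂(μ m)) atTop
      (nhds (∫ p : ℝ × ℝ, p.2 * Real.exp (-p.1) ∂ν)) :=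
  stmt_11_general n A B C hA μ ν hsupp hsuppν hbound hweak
end

section
/- Let Λ_m ⊂ Z^k denote the weights of a torus action on the degree-m part R_m of a graded ring, and suppose there exist A, B > 0 such that ⟨α, ξ⟩ ≥ −Am and |⟨α, η⟩| ≤ A⟨α, ξ⟩ + Bm for all α ∈ Λ_m, and that there is C > 0 with the uniform bound ∑_{⟨α,ξ⟩ ≤ λm} dim R_{m,α} ≤ C(λ+1)^n m^n. Then the truncated tail sums are uniformly small: for each ε > 0 there is Λ₀ with (1/m^n) ∑_{⟨α/m, ξ⟩ ≥ Λ₀} e^{−⟨α/m, ξ⟩} |⟨α/m, η⟩| dim R_{m,α} ≤ ε for all m ≥ 1. -/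
open scoped Classical

/-- Geometric sum bound. -/
lemma stmt19_geom_sum_le {r : ℝ} (h0 : 0 ≤ r) (h1 : r < 1) (J : ℕ) :
    ∑ j ∈ Finset.range J, r ^ j ≤ (1 - r)⁻¹ := by
  rw [geom_sum_eq h1.ne J]
  have h1r : (0:ℝ) < 1 - r := by linarith
  have hpow : (0:ℝ) ≤ r ^ J := pow_nonneg h0 J
  rw [div_le_iff_of_neg (by linarith : r - 1 < 0)]
  have : (1 - r)⁻¹ * (1 - r) = 1 := inv_mul_cancel₀ h1r.ne'
  nlinarith [this]

/-- Polynomial times exponential bound: `x ^ p ≤ p ! * exp x` for `x ≥ 0`. -/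
lemma stmt19_pow_le_exp {x : ℝ} (hx : 0 ≤ x) (p : ℕ) :
    x ^ p ≤ (Nat.factorial p : ℝ) * Real.exp x := by
  have h := Real.pow_div_factorial_le_exp x hx p
  have hp : (0:ℝ) < (Nat.factorial p : ℝ) := by positivity
  rw [div_le_iff₀ hp] at h
  linarith [h]

/-- Shell bound: `exp(-t) * (A*(t+1)+B) * (t+2)^n ≤ (A+B) * K * exp(-t/2)`
where `K = 2^(n+1) * (n+1)! * e`. -/
lemma stmt19_shell {A B : ℝ} (hA : 0 < A) (hB : 0 < B) (n : ℕ) {t : ℝ} (ht : 0 ≤ t) :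
    Real.exp (-t) * ((A * (t + 1) + B) * (t + 2) ^ n) ≤
      (A + B) * (2 ^ (n+1) * (Nat.factorial (n+1) : ℝ) * Real.exp 1) * Real.exp (-(t/2)) := by
  have h1 : A * (t + 1) + B ≤ (A + B) * (t + 2) := by nlinarith
  have h2 : (t + 2) ^ (n+1) ≤ 2 ^ (n+1) * (Nat.factorial (n+1) : ℝ) * Real.exp (t/2 + 1) := by
    have key : (t/2 + 1) ^ (n+1) ≤ (Nat.factorial (n+1) : ℝ) * Real.exp (t/2 + 1) :=
      stmt19_pow_le_exp (by linarith) (n+1)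
    have : (t + 2) ^ (n+1) = 2 ^ (n+1) * (t/2 + 1) ^ (n+1) := by
      rw [← mul_pow]; ring_nf
    rw [this]
    have h2p : (0:ℝ) ≤ 2 ^ (n+1) := by positivity
    calc (2:ℝ) ^ (n+1) * (t/2 + 1) ^ (n+1)
        ≤ 2 ^ (n+1) * ((Nat.factorial (n+1) : ℝ) * Real.exp (t/2 + 1)) := by
          exact mul_le_mul_of_nonneg_left key h2p
      _ = 2 ^ (n+1) * (Nat.factorial (n+1) : ℝ) * Real.exp (t/2 + 1) := by ring
  have hAB : (A * (t + 1) + B) * (t + 2) ^ n ≤ (A + B) * (t + 2) ^ (n+1) := by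
    have h3 : (0:ℝ) ≤ (t + 2) ^ n := by positivity
    calc (A * (t + 1) + B) * (t + 2) ^ n ≤ ((A + B) * (t + 2)) * (t + 2) ^ n :=
          mul_le_mul_of_nonneg_right h1 h3
      _ = (A + B) * (t + 2) ^ (n+1) := by ring
  have hexp : Real.exp (-t) * Real.exp (t/2 + 1) = Real.exp 1 * Real.exp (-(t/2)) := by
    rw [← Real.exp_add, ← Real.exp_add]; ring_nf
  have hABpos : (0:ℝ) < A + B := by linarith
  calc Real.exp (-t) * ((A * (t + 1) + B) * (t + 2) ^ n)
      ≤ Real.exp (-t) * ((A + B) * (t + 2) ^ (n+1)) := by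
        exact mul_le_mul_of_nonneg_left hAB (Real.exp_nonneg _)
    _ ≤ Real.exp (-t) * ((A + B) * (2 ^ (n+1) * (Nat.factorial (n+1) : ℝ) * Real.exp (t/2 + 1))) := by
        refine mul_le_mul_of_nonneg_left ?_ (Real.exp_nonneg _)
        exact mul_le_mul_of_nonneg_left h2 hABpos.le
    _ = (A + B) * (2 ^ (n+1) * (Nat.factorial (n+1) : ℝ)) * (Real.exp (-t) * Real.exp (t/2 + 1)) := by
        ring
    _ = (A + B) * (2 ^ (n+1) * (Nat.factorial (n+1) : ℝ) * Real.exp 1) * Real.exp (-(t/2)) := by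
        rw [hexp]; ring

set_option maxHeartbeats 1000000 in
/-- Uniform tail estimate: under the support bounds ⟨α,ξ⟩ ≥ −Am, |⟨α,η⟩| ≤ A⟨α,ξ⟩ + Bm
and the polynomial dimension bounds, the truncated tail sums in the derivative formula
for the weighted volume are uniformly small. -/
theorem stmt_19 {k : ℕ} (n : ℕ) (Λ : ℕ → Finset (Fin k → ℝ))
    (dims : ℕ → (Fin k → ℝ) → ℕ) (ξ η : Fin k → ℝ)
    (A B C : ℝ) (hA : 0 < A) (hB : 0 < B) (hC : 0 < C)
    (hsupp : ∀ m : ℕ, 1 ≤ m → ∀ α ∈ Λ m,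
      (∑ i, α i * ξ i) ≥ -(A * m) ∧
      |∑ i, α i * η i| ≤ A * (∑ i, α i * ξ i) + B * m)
    (hbound : ∀ m : ℕ, 1 ≤ m → ∀ lam ≥ (0 : ℝ),
      (∑ α ∈ (Λ m).filter (fun α => (∑ i, α i * ξ i) ≤ lam * m), (dims m α : ℝ))
        ≤ C * (lam + 1) ^ n * (m : ℝ) ^ n) :
    ∀ ε > (0 : ℝ), ∃ Λ₀ : ℝ, ∀ m : ℕ, 1 ≤ m →
      (1 / (m : ℝ) ^ n) *
        ∑ α ∈ (Λ m).filter (fun α => Λ₀ ≤ (∑ i, α i * ξ i) / m),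
          Real.exp (-((∑ i, α i * ξ i) / m)) * |(∑ i, α i * η i) / m| * (dims m α : ℝ)
      ≤ ε := by
  intro ε hε
  set r : ℝ := Real.exp (-(1/2 : ℝ)) with hr_def
  have hr0 : 0 < r := Real.exp_pos _
  have hr1 : r < 1 := Real.exp_lt_one_iff.mpr (by norm_num)
  set K : ℝ := 2 ^ (n+1) * (Nat.factorial (n+1) : ℝ) * Real.exp 1 with hK_def
  have hK0 : 0 < K := by positivity
  set D : ℝ := C * ((A + B) * K) * (1 - r)⁻¹ with hD_def
  have hD0 : 0 < D := by
    have : (0:ℝ) < 1 - r := by linarith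
    have : (0:ℝ) < (1 - r)⁻¹ := by positivity
    have hAB : (0:ℝ) < A + B := by linarith
    positivity
  obtain ⟨N, hN⟩ := exists_nat_ge (2 * Real.log (D / ε))
  have hexpN : D * Real.exp (-((N:ℝ)/2)) ≤ ε := by
    have h1 : Real.exp (-((N:ℝ)/2)) ≤ ε / D := by
      have hDε : 0 < D / ε := by positivity
      have : -((N:ℝ)/2) ≤ Real.log (ε / D) := by
        rw [Real.log_div hε.ne' hD0.ne', Real.log_div hD0.ne' hε.ne'] at *
        linarith
      calc Real.exp (-((N:ℝ)/2)) ≤ Real.exp (Real.log (ε / D)) := Real.exp_le_exp.mpr this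
        _ = ε / D := Real.exp_log (by positivity)
    calc D * Real.exp (-((N:ℝ)/2)) ≤ D * (ε / D) := by
          exact mul_le_mul_of_nonneg_left h1 hD0.le
      _ = ε := by field_simp
  refine ⟨(N : ℝ), fun m hm => ?_⟩
  have hm0 : (0:ℝ) < (m:ℝ) := by exact_mod_cast hm
  have hmn : (0:ℝ) < (m:ℝ) ^ n := by positivity
  set Sξ : (Fin k → ℝ) → ℝ := fun α => ∑ i, α i * ξ i with hSξ
  set Sη : (Fin k → ℝ) → ℝ := fun α => ∑ i, α i * η i with hSη
  set f : (Fin k → ℝ) → ℝ := fun α =>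
    Real.exp (-(Sξ α / m)) * |Sη α / m| * (dims m α : ℝ) with hf
  set T : Finset (Fin k → ℝ) := (Λ m).filter (fun α => (N:ℝ) ≤ Sξ α / m) with hT
  -- find J bounding the values
  have hbdd : ∃ J : ℕ, ∀ α ∈ Λ m, Sξ α / m < (N:ℝ) + J := by
    have hfin : (((Λ m).image (fun α => Sξ α / m)) : Set ℝ).Finite :=
      Finset.finite_toSet _
    obtain ⟨M, hM⟩ := hfin.bddAbove
    obtain ⟨J, hJ⟩ := exists_nat_gt (M - N)
    refine ⟨J, fun α hα => ?_⟩
    have : Sξ α / m ≤ M := hM (by simp [Finset.mem_image]; exact ⟨α, hα, rfl⟩)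
    linarith
  obtain ⟨J, hJ⟩ := hbdd
  set g : (Fin k → ℝ) → ℕ := fun α => (⌊Sξ α / m - N⌋).toNat with hg
  have hmaps : ∀ α ∈ T, g α ∈ Finset.range J := by
    intro α hα
    rw [hT, Finset.mem_filter] at hα
    have hx : (N:ℝ) ≤ Sξ α / m := hα.2
    have hx2 : Sξ α / m < (N:ℝ) + J := hJ α hα.1
    have h0 : (0:ℝ) ≤ Sξ α / m - N := by linarith
    have hfl : ((g α : ℤ) : ℝ) ≤ Sξ α / m - N := by
      rw [hg]; simp only
      rw [Int.toNat_of_nonneg (Int.floor_nonneg.mpr h0)]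
      exact Int.floor_le _
    rw [Finset.mem_range]
    by_contra hcon
    push_neg at hcon
    have : (J:ℝ) ≤ (g α : ℝ) := by exact_mod_cast hcon
    push_cast at hfl
    linarith
  -- fiber decomposition
  show (1 / (m:ℝ) ^ n) * ∑ α ∈ T, f α ≤ ε
  have hdecomp : ∑ α ∈ T, f α = ∑ j ∈ Finset.range J, ∑ α ∈ T.filter (fun α => g α = j), f α :=
    (Finset.sum_fiberwise_of_maps_to hmaps f).symm
  -- bound each fiber
  have hfiber : ∀ j ∈ Finset.range J, ∑ α ∈ T.filter (fun α => g α = j), f α ≤ C * ((A + B) * K) * Real.exp (-(((N:ℝ)+j)/2)) * (m:ℝ) ^ n := by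
    intro j hj
    set t : ℝ := (N:ℝ) + j with ht_def
    have ht0 : 0 ≤ t := by positivity
    have hmem : ∀ α ∈ T.filter (fun α => g α = j), t ≤ Sξ α / m ∧ Sξ α / m < t + 1 := by
      intro α hα
      rw [Finset.mem_filter, hT, Finset.mem_filter] at hα
      obtain ⟨⟨hαΛ, hxN⟩, hgα⟩ := hα
      have h0 : (0:ℝ) ≤ Sξ α / m - N := by linarith
      have hfl : ⌊Sξ α / m - N⌋ = (j : ℤ) := by
        simp only [hg] at hgα
        rw [← hgα]
        exact (Int.toNat_of_nonneg (Int.floor_nonneg.mpr h0)).symm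
      constructor
      · have := Int.floor_le (Sξ α / m - (N:ℝ))
        rw [hfl] at this; push_cast at this; rw [ht_def]; linarith
      · have := Int.lt_floor_add_one (Sξ α / m - (N:ℝ))
        rw [hfl] at this; push_cast at this; rw [ht_def]; linarith
    -- pointwise bound
    have hpt : ∀ α ∈ T.filter (fun α => g α = j), f α ≤ Real.exp (-t) * (A * (t + 1) + B) * (dims m α : ℝ) := by
      intro α hα
      obtain ⟨hlo, hhi⟩ := hmem α hα
      have hαΛ : α ∈ Λ m := by
        rw [Finset.mem_filter, hT, Finset.mem_filter] at hα
        exact hα.1.1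
      obtain ⟨_, hη⟩ := hsupp m hm α hαΛ
      have hexp : Real.exp (-(Sξ α / m)) ≤ Real.exp (-t) := Real.exp_le_exp.mpr (by linarith)
      have habs : |Sη α / m| ≤ A * (t + 1) + B := by
        rw [abs_div, abs_of_pos hm0, div_le_iff₀ hm0]
        have hlt : Sξ α < (t + 1) * m := (div_lt_iff₀ hm0).mp hhi
        have : A * Sξ α + B * m ≤ (A * (t + 1) + B) * m := by nlinarith
        linarith [hη]
      have h2 : (0:ℝ) ≤ |Sη α / m| := abs_nonneg _
      have h3 : (0:ℝ) ≤ (dims m α : ℝ) := Nat.cast_nonneg _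
      have hff : f α = Real.exp (-(Sξ α / m)) * |Sη α / m| * (dims m α : ℝ) := by rw [hf]
      rw [hff]
      exact mul_le_mul_of_nonneg_right (mul_le_mul hexp habs h2 (Real.exp_nonneg _)) h3
    have hsum1 : ∑ α ∈ T.filter (fun α => g α = j), f α ≤ Real.exp (-t) * (A * (t + 1) + B) * ∑ α ∈ T.filter (fun α => g α = j), (dims m α : ℝ) := by
      rw [Finset.mul_sum]
      exact Finset.sum_le_sum hpt
    -- dims sum bound
    have hsub : T.filter (fun α => g α = j) ⊆ (Λ m).filter (fun α => Sξ α ≤ (t + 1) * m) := by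
      intro α hα
      have hαΛ : α ∈ Λ m := by
        rw [Finset.mem_filter, hT, Finset.mem_filter] at hα
        exact hα.1.1
      obtain ⟨_, hhi⟩ := hmem α hα
      rw [Finset.mem_filter]
      refine ⟨hαΛ, ?_⟩
      rw [div_lt_iff₀ hm0] at hhi
      linarith
    have hdims : ∑ α ∈ T.filter (fun α => g α = j), (dims m α : ℝ) ≤ C * (t + 2) ^ n * (m:ℝ) ^ n := by
      have s1 : ∑ α ∈ T.filter (fun α => g α = j), (dims m α : ℝ) ≤ ∑ α ∈ (Λ m).filter (fun α => Sξ α ≤ (t + 1) * m), (dims m α : ℝ) :=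
        Finset.sum_le_sum_of_subset_of_nonneg hsub (fun α _ _ => Nat.cast_nonneg _)
      have s2 := hbound m hm (t + 1) (by linarith)
      have s3 : C * ((t + 1) + 1) ^ n * (m:ℝ) ^ n = C * (t + 2) ^ n * (m:ℝ) ^ n := by ring_nf
      rw [hSξ] at s1
      linarith [s1, s2, s3.le]
    have hnn : (0:ℝ) ≤ Real.exp (-t) * (A * (t + 1) + B) := by
      have : (0:ℝ) ≤ A * (t + 1) + B := by nlinarith
      positivity
    have hsum2 : ∑ α ∈ T.filter (fun α => g α = j), f α ≤ Real.exp (-t) * ((A * (t + 1) + B) * (t + 2) ^ n) * (C * (m:ℝ) ^ n) := by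
      have s4 := mul_le_mul_of_nonneg_left hdims hnn
      have s5 : Real.exp (-t) * (A * (t + 1) + B) * (C * (t + 2) ^ n * (m:ℝ) ^ n) = Real.exp (-t) * ((A * (t + 1) + B) * (t + 2) ^ n) * (C * (m:ℝ) ^ n) := by ring
      linarith [hsum1, s4, s5.le]
    have hshell := stmt19_shell hA hB n ht0
    rw [← hK_def] at hshell
    have s6 := mul_le_mul_of_nonneg_right hshell (by positivity : (0:ℝ) ≤ C * (m:ℝ) ^ n)
    have s7 : (A + B) * K * Real.exp (-(t/2)) * (C * (m:ℝ) ^ n) = C * ((A + B) * K) * Real.exp (-(t/2)) * (m:ℝ) ^ n := by ring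
    rw [← s7]
    exact hsum2.trans s6
  -- sum over shells
  have hrpow : ∀ j : ℕ, Real.exp (-(((N:ℝ)+j)/2)) = Real.exp (-((N:ℝ)/2)) * r ^ j := by
    intro j
    rw [hr_def, ← Real.exp_nat_mul, ← Real.exp_add]
    ring_nf
  have hgeom : ∑ j ∈ Finset.range J, r ^ j ≤ (1 - r)⁻¹ := stmt19_geom_sum_le hr0.le hr1 J
  have htotal : ∑ α ∈ T, f α ≤ D * Real.exp (-((N:ℝ)/2)) * (m:ℝ) ^ n := by
    rw [hdecomp]
    have e1 : ∑ j ∈ Finset.range J, ∑ α ∈ T.filter (fun α => g α = j), f α ≤ ∑ j ∈ Finset.range J, C * ((A + B) * K) * Real.exp (-(((N:ℝ)+j)/2)) * (m:ℝ) ^ n :=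
      Finset.sum_le_sum hfiber
    have e2 : ∑ j ∈ Finset.range J, C * ((A + B) * K) * Real.exp (-(((N:ℝ)+j)/2)) * (m:ℝ) ^ n = C * ((A + B) * K) * Real.exp (-((N:ℝ)/2)) * (m:ℝ) ^ n * ∑ j ∈ Finset.range J, r ^ j := by
      rw [Finset.mul_sum]
      apply Finset.sum_congr rfl
      intro j _
      rw [hrpow j]; ring
    have hpos : (0:ℝ) ≤ C * ((A + B) * K) * Real.exp (-((N:ℝ)/2)) * (m:ℝ) ^ n := by
      have hAB : (0:ℝ) < A + B := by linarith
      positivity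
    have e3 := mul_le_mul_of_nonneg_left hgeom hpos
    have e4 : C * ((A + B) * K) * Real.exp (-((N:ℝ)/2)) * (m:ℝ) ^ n * (1 - r)⁻¹ = D * Real.exp (-((N:ℝ)/2)) * (m:ℝ) ^ n := by rw [hD_def]; ring
    rw [e2] at e1
    exact e1.trans (e3.trans e4.le)
  have hfin1 : (1 / (m:ℝ) ^ n) * ∑ α ∈ T, f α ≤ (1 / (m:ℝ) ^ n) * (D * Real.exp (-((N:ℝ)/2)) * (m:ℝ) ^ n) :=
    mul_le_mul_of_nonneg_left htotal (by positivity)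
  have hfin2 : (1 / (m:ℝ) ^ n) * (D * Real.exp (-((N:ℝ)/2)) * (m:ℝ) ^ n) = D * Real.exp (-((N:ℝ)/2)) := by
    field_simp
  calc (1 / (m:ℝ) ^ n) * ∑ α ∈ T, f α ≤ D * Real.exp (-((N:ℝ)/2)) := by rw [← hfin2]; exact hfin1
    _ ≤ ε := hexpN
end
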